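/- In any ordered goods instance, let i be an agent and let k be the number of items j ∈ M with v_i(j) ≥ μ_i. Then agent i has an MMS partition in which each of the items 1, 2, …, min(n − 1, k) forms a bundle of cardinality one. -/

import Mathlib

/-!
An MMS partition exists since only finitely many values of the smallest bundle are attainable.
By the ordering, each of the items `1, …, min (n - 1, k)` alone is worth at least `μ_i`. Given
an MMS partition in which `1, …, s` are singleton bundles and `s + 1 < n`, pigeonhole gives a
bundle `b` containing none of the items `1, …, s + 1`; moving everything except `s + 1` from the
bundle of `s + 1` into `b` keeps every bundle worth at least `μ_i`, because values are
non-negative, and makes `{s + 1}` a bundle without touching the earlier singletons.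
-/

open Finset

/-- `A` is an (ordered) partition of the item set `M` into bundles indexed by
the agent set `N`: bundles are pairwise disjoint subsets of `M` whose union is `M`. -/
def IsPartition (N M : Finset ℕ) (A : ℕ → Finset ℕ) : Prop :=
  (∀ i ∈ N, A i ⊆ M) ∧
  (∀ i ∈ N, ∀ j ∈ N, i ≠ j → Disjoint (A i) (A j)) ∧
  N.biUnion A = M

/-- Additive value of a bundle `B` under item values `v`. -/
noncomputable def bval (v : ℕ → ℝ) (B : Finset ℕ) : ℝ := ∑ g ∈ B, v g

/-- The maximin share of an agent with item values `v`, over the instance with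
agent set `N` and item set `M`: the largest, over all partitions, of the minimum
bundle value. -/
noncomputable def mms (N M : Finset ℕ) (v : ℕ → ℝ) : ℝ :=
  sSup { x | ∃ A : ℕ → Finset ℕ, IsPartition N M A ∧
    x = sInf ((fun i => bval v (A i)) '' (N : Set ℕ)) }

/-- `A` is an MMS partition for an agent with item values `v`: every bundle is
worth at least the agent's maximin share. -/
def IsMMSPartition (N M : Finset ℕ) (v : ℕ → ℝ) (A : ℕ → Finset ℕ) : Prop :=
  IsPartition N M A ∧ ∀ j ∈ N, mms N M v ≤ bval v (A j)

/-- The instance `(N, M, v)` admits an MMS allocation: an allocation giving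
every agent a bundle worth at least her maximin share. -/
def ExistsMMSAllocation (N M : Finset ℕ) (v : ℕ → ℕ → ℝ) : Prop :=
  ∃ A : ℕ → Finset ℕ, IsPartition N M A ∧
    ∀ i ∈ N, mms N M (v i) ≤ bval (v i) (A i)

/-- A goods instance: all item values are non-negative. -/
def GoodsInstance (N M : Finset ℕ) (v : ℕ → ℕ → ℝ) : Prop :=
  ∀ i ∈ N, ∀ j ∈ M, 0 ≤ v i j

/-- A chores instance: all item values are non-positive. -/
def ChoresInstance (N M : Finset ℕ) (v : ℕ → ℕ → ℝ) : Prop :=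
  ∀ i ∈ N, ∀ j ∈ M, v i j ≤ 0

/-- Ordered goods instance: lower-numbered items are (weakly) more valuable. -/
def OrderedGoods (N M : Finset ℕ) (v : ℕ → ℕ → ℝ) : Prop :=
  ∀ i ∈ N, ∀ j ∈ M, ∀ k ∈ M, j ≤ k → v i k ≤ v i j

/-- Ordered chores instance: lower-numbered items are (weakly) worse. -/
def OrderedChores (N M : Finset ℕ) (v : ℕ → ℕ → ℝ) : Prop :=
  ∀ i ∈ N, ∀ j ∈ M, ∀ k ∈ M, j ≤ k → v i j ≤ v i k

/-- Removing agents `N'` and items `M'` is a valid reduction: `M'` can be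
partitioned among the agents of `N'` so that each receives a bundle worth at
least her MMS in the original instance, and in the reduced instance every
remaining agent's MMS is at least her MMS in the original instance. -/
def ValidReduction (N M : Finset ℕ) (v : ℕ → ℕ → ℝ) (N' M' : Finset ℕ) : Prop :=
  N' ⊆ N ∧ M' ⊆ M ∧
  (∃ B : ℕ → Finset ℕ, IsPartition N' M' B ∧
    ∀ i ∈ N', mms N M (v i) ≤ bval (v i) (B i)) ∧
  ∀ i ∈ N \ N', mms N M (v i) ≤ mms (N \ N') (M \ M') (v i)

/-- In an ordered instance, bundle `B` dominates bundle `B'`: there is an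
injective map `f : B' → B` with `f j ≤ j` for all `j ∈ B'`. -/
def Dominates (B B' : Finset ℕ) : Prop :=
  ∃ f : ℕ → ℕ, Set.InjOn f (B' : Set ℕ) ∧ ∀ j ∈ B', f j ∈ B ∧ f j ≤ j

lemma isPartition_ite {N : Finset ℕ} {i₀ : ℕ} (hi₀ : i₀ ∈ N) (M : Finset ℕ) :
    IsPartition N M fun j => if j = i₀ then M else ∅ := by
  refine ⟨fun j _ => ?_, fun a _ b _ hab => ?_, ?_⟩
  · dsimp only
    split_ifs <;> simp
  · rcases eq_or_ne a i₀ with rfl | ha <;> simp [*, Ne.symm hab]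
  · ext x
    simp only [mem_biUnion]
    exact ⟨fun ⟨j, _, hx⟩ => by split_ifs at hx <;> simp_all, fun hx => ⟨i₀, hi₀, by simpa⟩⟩

lemma exists_isMMSPartition {N M : Finset ℕ} {v : ℕ → ℝ} (hN : N.Nonempty) :
    ∃ A, IsMMSPartition N M v A := by
  obtain ⟨i₀, hi₀⟩ := hN
  set minVal := fun A : ℕ → Finset ℕ => sInf ((fun i => bval v (A i)) '' (N : Set ℕ))
  have hmin : ∀ A, minVal A ∈ (fun i => bval v (A i)) '' (N : Set ℕ) ∧
      ∀ j ∈ N, minVal A ≤ bval v (A j) := fun A =>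
    have hfin := N.finite_toSet.image fun i => bval v (A i)
    ⟨(Set.Nonempty.image _ ⟨i₀, hi₀⟩).csInf_mem hfin,
      fun j hj => csInf_le hfin.bddBelow (Set.mem_image_of_mem _ hj)⟩
  set S := {x | ∃ A, IsPartition N M A ∧ x = minVal A}
  have hS_ne : S.Nonempty := ⟨_, _, isPartition_ite hi₀ M, rfl⟩
  have hS_fin : S.Finite := by
    refine ((M.powerset : Set (Finset ℕ)).toFinite.image (bval v)).subset ?_
    rintro x ⟨A, hA, rfl⟩
    obtain ⟨j, hj, hjx⟩ := (hmin A).1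
    exact ⟨A j, by simpa using hA.1 j hj, hjx⟩
  obtain ⟨A, hA, hAx⟩ := hS_ne.csSup_mem hS_fin
  exact ⟨A, hA, fun j hj => (show mms N M v = minVal A from hAx) ▸ (hmin A).2 j hj⟩

lemma IsPartition.exists_disjoint {N M : Finset ℕ} {A : ℕ → Finset ℕ} (hA : IsPartition N M A)
    {I : Finset ℕ} (hI : #I < #N) : ∃ j ∈ N, Disjoint (A j) I := by
  by_contra! h
  choose! f hfA hfI using fun j hj => not_disjoint_iff.1 (h j hj)
  have hf_inj : Set.InjOn f N := fun j₁ hj₁ j₂ hj₂ hf => by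
    by_contra hne
    exact disjoint_left.1 (hA.2.1 j₁ hj₁ j₂ hj₂ hne) (hfA j₁ hj₁) (hf ▸ hfA j₂ hj₂)
  exact (card_le_card_of_injOn f hfI hf_inj).not_gt hI

def transferItems (A : ℕ → Finset ℕ) (a b : ℕ) (T : Finset ℕ) : ℕ → Finset ℕ :=
  Function.update (Function.update A a (A a \ T)) b (A b ∪ T)

section transferItems

variable {N M : Finset ℕ} {A : ℕ → Finset ℕ} {a b : ℕ} {T : Finset ℕ}

lemma transferItems_apply_of_ne {c : ℕ} (ha : c ≠ a) (hb : c ≠ b) :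
    transferItems A a b T c = A c := by
  simp [transferItems, ha, hb]

lemma transferItems_apply_left (hab : a ≠ b) : transferItems A a b T a = A a \ T := by
  simp [transferItems, hab]

lemma transferItems_apply_right : transferItems A a b T b = A b ∪ T := by
  simp [transferItems]

lemma IsPartition.mem_transferItems_iff (hA : IsPartition N M A) (ha : a ∈ N) (hab : a ≠ b)
    (hT : T ⊆ A a) {c : ℕ} (hc : c ∈ N) {x : ℕ} :
    x ∈ transferItems A a b T c ↔ if x ∈ T then c = b else x ∈ A c := by
  split_ifs with hx
  · rcases eq_or_ne c b with rfl | hcb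
    · simp [transferItems_apply_right, hx]
    rcases eq_or_ne c a with rfl | hca
    · simp [transferItems_apply_left hab, hx, hcb]
    rw [transferItems_apply_of_ne hca hcb]
    exact iff_of_false (disjoint_left.1 (hA.2.1 a ha c hc (Ne.symm hca)) (hT hx)) hcb
  · rcases eq_or_ne c b with rfl | hcb
    · simp [transferItems_apply_right, hx]
    rcases eq_or_ne c a with rfl | hca
    · simp [transferItems_apply_left hab, hx]
    rw [transferItems_apply_of_ne hca hcb]

lemma IsPartition.transferItems (hA : IsPartition N M A) (ha : a ∈ N) (hb : b ∈ N) (hab : a ≠ b)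
    (hT : T ⊆ A a) : IsPartition N M (transferItems A a b T) := by
  have hmem := fun {c} (hc : c ∈ N) {x} => hA.mem_transferItems_iff ha hab hT hc (x := x)
  refine ⟨fun c hc x hx => ?_, fun c hc d hd hcd => disjoint_left.2 fun x hxc hxd => ?_, ?_⟩
  · rw [hmem hc] at hx
    split_ifs at hx with hxT
    exacts [hA.1 a ha (hT hxT), hA.1 c hc hx]
  · rw [hmem hc] at hxc
    rw [hmem hd] at hxd
    split_ifs at hxc hxd
    exacts [hcd (hxc.trans hxd.symm), disjoint_left.1 (hA.2.1 c hc d hd hcd) hxc hxd]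
  · ext x
    rw [← hA.2.2]
    simp only [mem_biUnion]
    constructor
    · rintro ⟨c, hc, hx⟩
      rw [hmem hc] at hx
      split_ifs at hx with hxT
      exacts [⟨a, ha, hT hxT⟩, ⟨c, hc, hx⟩]
    · rintro ⟨c, hc, hx⟩
      by_cases hxT : x ∈ T
      · exact ⟨b, hb, by rw [hmem hb, if_pos hxT]⟩
      · exact ⟨c, hc, by rw [hmem hc, if_neg hxT]; exact hx⟩

lemma IsMMSPartition.transferItems_erase {v : ℕ → ℝ} (hA : IsMMSPartition N M v A)
    (hv : ∀ j ∈ M, 0 ≤ v j) (ha : a ∈ N) (hb : b ∈ N) (hab : a ≠ b) {g : ℕ} (hg : g ∈ A a)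
    (hμg : mms N M v ≤ v g) : IsMMSPartition N M v (transferItems A a b ((A a).erase g)) := by
  have hpart := hA.1.transferItems ha hb hab (erase_subset g (A a))
  refine ⟨hpart, fun c hc => ?_⟩
  rcases eq_or_ne c b with rfl | hcb
  · have hsub := hpart.1 c hc
    rw [transferItems_apply_right] at hsub ⊢
    exact (hA.2 c hc).trans <| sum_le_sum_of_subset_of_nonneg subset_union_left
      fun x hx _ => hv x (hsub hx)
  rcases eq_or_ne c a with rfl | hca
  · rwa [transferItems_apply_left hab, sdiff_erase_self hg, bval, sum_singleton]
  · rw [transferItems_apply_of_ne hca hcb]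
    exact hA.2 c hc

end transferItems

lemma exists_isMMSPartition_singleton_bundles {N M : Finset ℕ} {v : ℕ → ℝ}
    (hv : ∀ j ∈ M, 0 ≤ v j) (s : ℕ) (hs : s < #N) (hsM : Icc 1 s ⊆ M)
    (hμ : ∀ g ∈ Icc 1 s, mms N M v ≤ v g) :
    ∃ A, IsMMSPartition N M v A ∧ ∀ g ∈ Icc 1 s, ∃ j ∈ N, A j = {g} := by
  induction s with
  | zero => exact (exists_isMMSPartition (card_pos.1 hs)).imp fun A hA => ⟨hA, by simp⟩
  | succ s ih =>
    have hIcc : Icc 1 s ⊆ Icc 1 (s + 1) := Icc_subset_Icc_right s.le_succ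
    obtain ⟨A, hA, hsing⟩ := ih (by omega) (hIcc.trans hsM) fun g hg => hμ g (hIcc hg)
    have hlast : s + 1 ∈ Icc 1 (s + 1) := by simp
    obtain ⟨a, ha, hlast_a⟩ := mem_biUnion.1 (hA.1.2.2 ▸ hsM hlast)
    obtain ⟨b, hb, hb_disj⟩ := hA.1.exists_disjoint (I := Icc 1 (s + 1)) (by simpa using hs)
    have hab : a ≠ b := by
      rintro rfl
      exact disjoint_left.1 hb_disj hlast_a hlast
    refine ⟨_, hA.transferItems_erase hv ha hb hab hlast_a (hμ _ hlast), fun g hg => ?_⟩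
    obtain hgs | rfl : g ≤ s ∨ g = s + 1 := by simp at hg; omega
    · obtain ⟨j, hj, hAj⟩ := hsing g (by simp at hg ⊢; omega)
      have hja : j ≠ a := by
        rintro rfl
        rw [hAj, mem_singleton] at hlast_a
        omega
      have hjb : j ≠ b := by
        rintro rfl
        exact disjoint_left.1 hb_disj (hAj ▸ mem_singleton_self g) hg
      exact ⟨j, hj, by rw [transferItems_apply_of_ne hja hjb, hAj]⟩
    · exact ⟨a, ha, by rw [transferItems_apply_left hab, sdiff_erase_self hlast_a]⟩

lemma AntitoneOn.le_of_mem_Icc_card_filter {β : Type*} [LinearOrder β] {v : ℕ → β} {m : ℕ}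
    (hv : AntitoneOn v (Icc 1 m : Set ℕ)) {t : β} {g : ℕ}
    (hg : g ∈ Icc 1 #{j ∈ Icc 1 m | t ≤ v j}) : t ≤ v g := by
  have hcard_le : #{j ∈ Icc 1 m | t ≤ v j} ≤ m := (card_filter_le _ _).trans (by simp)
  have hgm : g ∈ Icc 1 m := by simp at hg ⊢; omega
  by_contra! hlt
  have hsub : {j ∈ Icc 1 m | t ≤ v j} ⊆ Icc 1 (g - 1) := by
    intro j hj
    rw [mem_filter] at hj
    refine mem_Icc.2 ⟨(mem_Icc.1 hj.1).1, ?_⟩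
    by_contra! hgj
    exact ((hv hgm hj.1 (by omega)).trans_lt hlt).not_ge hj.2
  have := card_le_card hsub
  simp at hg this
  omega

theorem mms_partition_layout (n m : ℕ) (v : ℕ → ℕ → ℝ)
    (hgoods : GoodsInstance (Finset.Icc 1 n) (Finset.Icc 1 m) v)
    (hord : OrderedGoods (Finset.Icc 1 n) (Finset.Icc 1 m) v)
    (i : ℕ) (hi : i ∈ Finset.Icc 1 n) (k : ℕ)
    (hk : k = ((Finset.Icc 1 m).filter (fun j =>
      mms (Finset.Icc 1 n) (Finset.Icc 1 m) (v i) ≤ v i j)).card) :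
    ∃ A : ℕ → Finset ℕ,
      IsMMSPartition (Finset.Icc 1 n) (Finset.Icc 1 m) (v i) A ∧
      ∀ g ∈ Finset.Icc 1 (min (n - 1) k), ∃ j ∈ Finset.Icc 1 n, A j = {g} := by
  have hn : 1 ≤ n := (mem_Icc.1 hi).1.trans (mem_Icc.1 hi).2
  have hkm : k ≤ m := hk ▸ (card_filter_le _ _).trans (by simp)
  have hvi : AntitoneOn (v i) (Icc 1 m : Set ℕ) := hord i hi
  exact exists_isMMSPartition_singleton_bundles (hgoods i hi) (min (n - 1) k) (by simp; omega)
    (Icc_subset_Icc_right (by omega))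
    fun g hg => hvi.le_of_mem_Icc_card_filter (hk ▸ Icc_subset_Icc_right (min_le_right _ _) hg)
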